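/- arXiv:1401.4567 — 5 statements merged into one kernel-verified Lean document; each statement's English description precedes it below -/
import Mathlib

section
/- Let F be a field, n ≥ 1, and let A be a singular n×n matrix over F (i.e., A is not invertible). Then for every finite subset S ⊆ F, the number of vectors b ∈ S^n (vectors all of whose n coordinates lie in S) for which the linear system A·w = b has a solution w ∈ F^n is at most |S|^(n−1). -/
/-!
A singular matrix `A` has a nonzero left null vector `u`, so every consistent right-hand side
`b = A w` lies on the hyperplane `u ⬝ᵥ b = 0`. If `u i ≠ 0`, a point of that hyperplane is
determined by its coordinates off `i`, so at most `|S| ^ (n - 1)` points of `S ^ n` lie on it.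
-/

open Matrix Finset

theorem Matrix.exists_ne_zero_forall_dotProduct_mulVec_eq_zero {ι K : Type*} [Fintype ι]
    [DecidableEq ι] [Field K] {A : Matrix ι ι K} (hA : ¬ IsUnit A) :
    ∃ u ≠ 0, ∀ w, u ⬝ᵥ A *ᵥ w = 0 := by
  have hdet : A.det = 0 := by
    rwa [isUnit_iff_isUnit_det, isUnit_iff_ne_zero, not_not] at hA
  obtain ⟨u, hu, huA⟩ := exists_vecMul_eq_zero_iff.mpr hdet
  exact ⟨u, hu, fun w => by rw [dotProduct_mulVec, huA, zero_dotProduct]⟩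

theorem injOn_restrict_ne_setOf_dotProduct_eq_zero {ι R : Type*} [Fintype ι]
    [DecidableEq ι] [Ring R] [NoZeroDivisors R] {u : ι → R} {i : ι} (hi : u i ≠ 0) :
    Set.InjOn (fun (b : ι → R) (j : {j // j ≠ i}) => b j) {b | u ⬝ᵥ b = 0} := by
  intro b hb b' hb' hbb'
  have hsingle : b - b' = Pi.single i ((b - b') i) := by
    ext j
    by_cases hj : j = i
    · subst hj; simp
    · simp [hj, congrFun hbb' ⟨j, hj⟩]
  have hmul : u i * (b - b') i = 0 := by
    rw [← dotProduct_single, ← hsingle, dotProduct_sub, hb, hb', sub_zero]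
  rw [← sub_eq_zero, hsingle, (mul_eq_zero.mp hmul).resolve_left hi, Pi.single_zero]

theorem card_filter_piFinset_dotProduct_eq_zero_le {ι R : Type*} [Fintype ι] [DecidableEq ι]
    [Ring R] [NoZeroDivisors R] [DecidableEq R] (S : Finset R) {u : ι → R} (hu : u ≠ 0) :
    ((Fintype.piFinset fun _ : ι => S).filter fun b => u ⬝ᵥ b = 0).card ≤
      S.card ^ (Fintype.card ι - 1) := by
  obtain ⟨i, hi⟩ := Function.ne_iff.mp hu
  calc ((Fintype.piFinset fun _ : ι => S).filter fun b => u ⬝ᵥ b = 0).card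
      ≤ (Fintype.piFinset fun _ : {j // j ≠ i} => S).card := by
        refine card_le_card_of_injOn (fun b j => b j) (fun b hb => ?_)
          ((injOn_restrict_ne_setOf_dotProduct_eq_zero hi).mono fun b hb => ?_)
        · exact Fintype.mem_piFinset.mpr fun j => Fintype.mem_piFinset.mp (mem_filter.mp hb).1 j
        · exact (mem_filter.mp hb).2
    _ = S.card ^ (Fintype.card ι - 1) := by
        simp [Fintype.card_subtype_compl]

open Classical in
theorem nonsingularity_certificate_soundness_general
    (F : Type*) [Field F] (n : ℕ)
    (A : Matrix (Fin n) (Fin n) F) (hA : ¬ IsUnit A)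
    (S : Finset F) :
    ((Fintype.piFinset (fun _ : Fin n => S)).filter
        (fun b => ∃ w : Fin n → F, A.mulVec w = b)).card ≤ S.card ^ (n - 1) := by
  obtain ⟨u, hu, hrange⟩ := exists_ne_zero_forall_dotProduct_mulVec_eq_zero hA
  calc _ ≤ ((Fintype.piFinset fun _ : Fin n => S).filter fun b => u ⬝ᵥ b = 0).card :=
        card_le_card <| monotone_filter_right _ fun _ _ ⟨w, hw⟩ => hw ▸ hrange w
    _ ≤ S.card ^ (n - 1) := by
        simpa using card_filter_piFinset_dotProduct_eq_zero_le S hu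

open Classical in
theorem nonsingularity_certificate_soundness
    (F : Type*) [Field F] (n : ℕ) (hn : 1 ≤ n)
    (A : Matrix (Fin n) (Fin n) F) (hA : ¬ IsUnit A)
    (S : Finset F) :
    ((Fintype.piFinset (fun _ : Fin n => S)).filter
        (fun b => ∃ w : Fin n → F, A.mulVec w = b)).card ≤ S.card ^ (n - 1) :=
  nonsingularity_certificate_soundness_general F n A hA S
end

section
/- Let F be a field, let A be an m×n matrix, B an n×p matrix, and C an m×p matrix over F with p ≥ 1 and C ≠ A·B, and let S ⊆ F be a finite subset. Then the number of vectors v ∈ S^p (vectors all of whose p coordinates lie in S) satisfying A·(B·v) = C·v is at most |S|^(p−1). -/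
/-!
Put `D = C - A * B`. A vector `v` passes the test exactly when `D *ᵥ v = 0`, and since `D ≠ 0`
some row `d` of `D` has an entry `d j ≠ 0`. On the hyperplane `d ⬝ᵥ v = 0` the coordinate `v j` is
determined by the other coordinates, so forgetting it maps the passing vectors of `S ^ p`
injectively into `S ^ (p - 1)`.
-/

open Matrix Finset

section Hyperplane

variable {ι R : Type*} [Fintype ι] [DecidableEq ι] [Ring R] [NoZeroDivisors R]

theorem eq_of_dotProduct_eq_zero_of_eqOn_ne {d v w : ι → R} {j : ι} (hj : d j ≠ 0)
    (hv : d ⬝ᵥ v = 0) (hw : d ⬝ᵥ w = 0) (hvw : ∀ k, k ≠ j → v k = w k) : v = w := by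
  have hsingle : v - w = Pi.single j (v j - w j) := by
    ext k
    rcases eq_or_ne k j with rfl | hk
    · simp
    · simp [hk, hvw k hk]
  have hj_diff : d j * (v j - w j) = 0 := by
    rw [← dotProduct_single, ← hsingle, dotProduct_sub, hv, hw, sub_self]
  rw [← sub_eq_zero, hsingle, (mul_eq_zero.mp hj_diff).resolve_left hj, Pi.single_zero]

theorem card_filter_dotProduct_eq_zero_le [DecidableEq R] {d : ι → R} {j : ι} (hj : d j ≠ 0)
    (S : Finset R) :
    #{v ∈ Fintype.piFinset fun _ : ι => S | d ⬝ᵥ v = 0} ≤ #S ^ (Fintype.card ι - 1) := by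
  calc #{v ∈ Fintype.piFinset fun _ : ι => S | d ⬝ᵥ v = 0}
      ≤ #(Fintype.piFinset fun _ : {k // k ≠ j} => S) := by
        refine card_le_card_of_injOn (fun v k => v k) (fun v hv => ?_) fun v hv w hw hvw => ?_
        · simp only [coe_filter, Set.mem_ofPred_eq, Fintype.mem_piFinset] at hv
          simpa using fun k _ => hv.1 k
        · simp only [coe_filter, Set.mem_ofPred_eq] at hv hw
          exact eq_of_dotProduct_eq_zero_of_eqOn_ne hj hv.2 hw.2 fun k hk => congrFun hvw ⟨k, hk⟩
    _ = #S ^ (Fintype.card ι - 1) := by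
        simp [Fintype.card_subtype_compl]

end Hyperplane

theorem dotProduct_sub_mul_eq_zero_of_mulVec_mulVec_eq {l m n R : Type*} [Fintype m] [Fintype n]
    [CommRing R] {A : Matrix l m R} {B : Matrix m n R} {C : Matrix l n R} {v : n → R}
    (hv : A *ᵥ (B *ᵥ v) = C *ᵥ v) (i : l) : (C - A * B) i ⬝ᵥ v = 0 :=
  congrFun (show (C - A * B) *ᵥ v = 0 by rw [sub_mulVec, ← mulVec_mulVec, hv, sub_self]) i

open Classical in
theorem freivalds_check_soundness_general
    (F : Type*) [Field F] (m n p : ℕ)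
    (A : Matrix (Fin m) (Fin n) F) (B : Matrix (Fin n) (Fin p) F)
    (C : Matrix (Fin m) (Fin p) F) (hC : C ≠ A * B)
    (S : Finset F) :
    ((Fintype.piFinset (fun _ : Fin p => S)).filter
        (fun v => A.mulVec (B.mulVec v) = C.mulVec v)).card ≤ S.card ^ (p - 1) := by
  obtain ⟨i, j, hij⟩ : ∃ i j, (C - A * B) i j ≠ 0 := by
    simpa [← Matrix.ext_iff, sub_eq_zero] using hC
  calc _ ≤ #{v ∈ Fintype.piFinset fun _ : Fin p => S | (C - A * B) i ⬝ᵥ v = 0} :=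
        card_le_card <| monotone_filter_right _
          fun _ _ hv => dotProduct_sub_mul_eq_zero_of_mulVec_mulVec_eq hv i
    _ ≤ S.card ^ (p - 1) := by
        simpa using card_filter_dotProduct_eq_zero_le hij S

open Classical in
theorem freivalds_check_soundness
    (F : Type*) [Field F] (m n p : ℕ) (hp : 1 ≤ p)
    (A : Matrix (Fin m) (Fin n) F) (B : Matrix (Fin n) (Fin p) F)
    (C : Matrix (Fin m) (Fin p) F) (hC : C ≠ A * B)
    (S : Finset F) :
    ((Fintype.piFinset (fun _ : Fin p => S)).filter
        (fun v => A.mulVec (B.mulVec v) = C.mulVec v)).card ≤ S.card ^ (p - 1) :=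
  freivalds_check_soundness_general F m n p A B C hC S
end

section
/- Let A be an m×n integer matrix whose rank over ℚ equals r, and suppose there exist injective maps ρ : {0,…,r−1} → {0,…,m−1} and γ : {0,…,r−1} → {0,…,n−1} such that d := det(A[ρ, γ]) is a nonzero integer, where A[ρ, γ] is the r×r submatrix of A with rows ρ and columns γ. Then for every prime p that does not divide d, the rank over ℤ/pℤ of the reduction of A modulo p equals r. -/
/-!
Over `ℚ` the minor `M = A[ρ, γ]` is invertible and `A` has rank `r`, so the columns `γ`
span the column space and `A = C M⁻¹ B` with `C = A[·, γ]`, `B = A[ρ, ·]`. Clearing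
denominators gives the integer identity `C * adj M * B = d • A`, which survives reduction
mod `p`. As `d` is a unit mod `p`, it factors the reduction through `r` dimensions, and the
reduced minor keeps the rank at least `r`.
-/

namespace Matrix

variable {m n k K R S : Type*}

theorem exists_mul_eq_of_range_mulVecLin_le [Fintype n] [Fintype k] [CommSemiring R]
    {A : Matrix m n R} {C : Matrix m k R}
    (h : LinearMap.range A.mulVecLin ≤ LinearMap.range C.mulVecLin) :
    ∃ X : Matrix k n R, C * X = A := by
  classical
  choose cols hcols using fun j : n => h ⟨Pi.single j 1, rfl⟩
  refine ⟨(of cols)ᵀ, ext fun i j => ?_⟩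
  rw [← col_apply A j i, ← mulVec_single_one A j]
  exact congrFun (hcols j) i

theorem le_rank_of_det_submatrix_ne_zero [CommRing R] [IsDomain R] [Fintype n] {r : ℕ}
    (A : Matrix m n R) (ρ : Fin r → m) (γ : Fin r → n) (hM : (A.submatrix ρ γ).det ≠ 0) :
    r ≤ A.rank := by
  simpa only [rank_of_det_ne_zero hM, Fintype.card_fin] using rank_submatrix_le A ρ γ

theorem range_mulVecLin_le_range_submatrix_cols [Field K] [Fintype n] {r : ℕ}
    (A : Matrix m n K) (ρ : Fin r → m) (γ : Fin r → n)
    (hA : A.rank ≤ r) (hM : (A.submatrix ρ γ).det ≠ 0) :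
    LinearMap.range A.mulVecLin ≤ LinearMap.range (A.submatrix id γ).mulVecLin := by
  classical
  have hle : LinearMap.range (A.submatrix id γ).mulVecLin ≤ LinearMap.range A.mulVecLin := by
    rw [show A.submatrix id γ = A * (1 : Matrix n n K).submatrix (Equiv.refl n) γ from
      (mul_submatrix_one (Equiv.refl n) γ A).symm, mulVecLin_mul]
    exact LinearMap.range_comp_le_range _ _
  refine (Submodule.eq_of_le_of_finrank_le hle (hA.trans ?_)).ge
  exact le_rank_of_det_submatrix_ne_zero (A.submatrix id γ) ρ id hM

theorem det_submatrix_map [CommRing R] [CommRing S] (f : R →+* S) {r : ℕ}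
    (A : Matrix m n R) (ρ : Fin r → m) (γ : Fin r → n) :
    ((A.map f).submatrix ρ γ).det = f (A.submatrix ρ γ).det := by
  rw [RingHom.map_det, RingHom.mapMatrix_apply, submatrix_map]

/-- The cross decomposition `A = C M⁻¹ B` through the minor `M = A[ρ, γ]`, cleared of
denominators. -/
def HasMinorFactorization [CommRing R] {r : ℕ} (A : Matrix m n R) (ρ : Fin r → m)
    (γ : Fin r → n) : Prop :=
  A.submatrix id γ * (A.submatrix ρ γ).adjugate * A.submatrix ρ id
    = (A.submatrix ρ γ).det • A

theorem hasMinorFactorization_of_rank_le [Field K] [Fintype n] {r : ℕ}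
    (A : Matrix m n K) (ρ : Fin r → m) (γ : Fin r → n)
    (hA : A.rank ≤ r) (hM : (A.submatrix ρ γ).det ≠ 0) :
    A.HasMinorFactorization ρ γ := by
  obtain ⟨X, hX⟩ := exists_mul_eq_of_range_mulVecLin_le
    (range_mulVecLin_le_range_submatrix_cols A ρ γ hA hM)
  have hB : A.submatrix ρ id = A.submatrix ρ γ * X := by
    conv_lhs => rw [← hX]
    exact submatrix_mul (A.submatrix id γ) X ρ id id Function.bijective_id
  rw [HasMinorFactorization, hB, ← Matrix.mul_assoc,
    Matrix.mul_assoc _ _ (A.submatrix ρ γ), adjugate_mul, Matrix.mul_smul, Matrix.mul_one,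
    Matrix.smul_mul, hX]

theorem hasMinorFactorization_map_iff [CommRing R] [CommRing S] (f : R →+* S) {r : ℕ}
    {A : Matrix m n R} {ρ : Fin r → m} {γ : Fin r → n} :
    (A.map f).HasMinorFactorization ρ γ ↔
      (A.submatrix id γ * (A.submatrix ρ γ).adjugate * A.submatrix ρ id).map f
        = ((A.submatrix ρ γ).det • A).map f := by
  rw [HasMinorFactorization, Matrix.map_mul, Matrix.map_mul, ← RingHom.mapMatrix_apply f,
    RingHom.map_adjugate, RingHom.mapMatrix_apply, det_submatrix_map,
    Matrix.map_smulₛₗ f f _ (map_mul f _)]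
  simp only [submatrix_map]

theorem HasMinorFactorization.map [CommRing R] [CommRing S] {r : ℕ} {A : Matrix m n R}
    {ρ : Fin r → m} {γ : Fin r → n} (h : A.HasMinorFactorization ρ γ) (f : R →+* S) :
    (A.map f).HasMinorFactorization ρ γ :=
  (hasMinorFactorization_map_iff f).2 (congrArg (Matrix.map · f) h)

theorem HasMinorFactorization.of_map [CommRing R] [CommRing S] {f : R →+* S}
    (hf : Function.Injective f) {r : ℕ} {A : Matrix m n R} {ρ : Fin r → m} {γ : Fin r → n}
    (h : (A.map f).HasMinorFactorization ρ γ) : A.HasMinorFactorization ρ γ :=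
  map_injective hf ((hasMinorFactorization_map_iff f).1 h)

theorem HasMinorFactorization.rank_eq [Field K] [Fintype n] {r : ℕ} {A : Matrix m n K}
    {ρ : Fin r → m} {γ : Fin r → n} (h : A.HasMinorFactorization ρ γ)
    (hM : (A.submatrix ρ γ).det ≠ 0) : A.rank = r := by
  refine le_antisymm ?_ (le_rank_of_det_submatrix_ne_zero A ρ γ hM)
  have hA : A = ((A.submatrix ρ γ).det⁻¹ •
      (A.submatrix id γ * (A.submatrix ρ γ).adjugate)) * A.submatrix ρ id := by
    rw [Matrix.smul_mul, h, smul_smul, inv_mul_cancel₀ hM, one_smul]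
  rw [hA]
  calc _ ≤ _ := rank_mul_le_left _ _
    _ ≤ Fintype.card (Fin r) := rank_le_card_width _
    _ = r := Fintype.card_fin r

end Matrix

open Matrix

theorem rank_mod_p_eq_of_not_dvd_minor_general
    (m n r : ℕ) (A : Matrix (Fin m) (Fin n) ℤ)
    (hr : (A.map (Int.cast : ℤ → ℚ)).rank = r)
    (ρ : Fin r → Fin m) (γ : Fin r → Fin n)
    (d : ℤ) (hd : d = (A.submatrix ρ γ).det) (hd0 : d ≠ 0) :
    ∀ (p : ℕ) [Fact p.Prime], ¬ ((p : ℤ) ∣ d) →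
      (A.map (Int.cast : ℤ → ZMod p)).rank = r := by
  intro p _ hp
  have hdet {S : Type} [CommRing S] (f : ℤ →+* S) : ((A.map f).submatrix ρ γ).det = f d := by
    rw [det_submatrix_map, hd]
  have hA : A.HasMinorFactorization ρ γ :=
    .of_map (Int.castRingHom ℚ).injective_int <|
      hasMinorFactorization_of_rank_le _ ρ γ hr.le (by rwa [hdet, eq_intCast, Int.cast_ne_zero])
  refine (hA.map (Int.castRingHom (ZMod p))).rank_eq ?_
  rwa [hdet, eq_intCast, ne_eq, ZMod.intCast_zmod_eq_zero_iff_dvd]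

theorem rank_mod_p_eq_of_not_dvd_minor
    (m n r : ℕ) (A : Matrix (Fin m) (Fin n) ℤ)
    (hr : (A.map (Int.cast : ℤ → ℚ)).rank = r)
    (ρ : Fin r → Fin m) (γ : Fin r → Fin n)
    (hρ : Function.Injective ρ) (hγ : Function.Injective γ)
    (d : ℤ) (hd : d = (A.submatrix ρ γ).det) (hd0 : d ≠ 0) :
    ∀ (p : ℕ) [Fact p.Prime], ¬ ((p : ℤ) ∣ d) →
      (A.map (Int.cast : ℤ → ZMod p)).rank = r :=
  rank_mod_p_eq_of_not_dvd_minor_general m n r A hr ρ γ d hd hd0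
end

section
/- Let A be an m×n integer matrix whose rank over ℚ equals r ≥ 1, and let d be a nonzero r×r minor of A (the determinant of the submatrix obtained by an injective choice of r rows and r columns). Then the set of primes p for which the rank over ℤ/pℤ of the reduction of A modulo p differs from r is finite and has cardinality at most log₂|d| (i.e., at most ⌊log₂|d|⌋). -/
/-!
Reduction mod `p` never raises the rank: columns that are independent mod `p` are independent
over `ℤ` (divide a relation by the gcd of its coefficients, which leaves a relation that survives
mod `p`), hence over `ℚ`. If `p ∤ d`, the chosen `r × r` minor stays invertible mod `p`, so the
rank mod `p` is still at least `r`. Thus every rank-dropping prime is a prime factor of `|d|`, and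
`k` distinct prime factors give `2 ^ k ≤ |d|`.
-/

open Matrix Module

namespace Int

variable {ι κ : Type*}

theorem linearIndependent_of_linearIndependent_cast_zmod [Fintype ι] {p : ℕ} (hp : p ≠ 1)
    {v : ι → κ → ℤ} (h : LinearIndependent (ZMod p) fun i j => (v i j : ZMod p)) :
    LinearIndependent ℤ v := by
  rw [Fintype.linearIndependent_iff] at h ⊢
  intro c hc
  by_contra! hne
  obtain ⟨i₀, hi₀⟩ := hne
  obtain ⟨c', hc', hgcd⟩ := Finset.extract_gcd c ⟨i₀, Finset.mem_univ i₀⟩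
  have hgcd_ne : Finset.univ.gcd c ≠ 0 := fun h0 =>
    hi₀ (Finset.gcd_eq_zero_iff.mp h0 i₀ (Finset.mem_univ i₀))
  have hrel : ∑ i, c' i • v i = 0 := by
    refine (smul_eq_zero.mp ?_).resolve_left hgcd_ne
    rw [Finset.smul_sum, ← hc]
    exact Finset.sum_congr rfl fun i _ => by rw [smul_smul, ← hc' i (Finset.mem_univ i)]
  have hrel_mod : ∑ i, (c' i : ZMod p) • (fun j => (v i j : ZMod p)) = 0 := by
    funext j
    simpa [Finset.sum_apply] using congrArg (Int.cast : ℤ → ZMod p) (congrFun hrel j)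
  have hdvd : (p : ℤ) ∣ Finset.univ.gcd c' := Finset.dvd_gcd fun i _ =>
    (ZMod.intCast_zmod_eq_zero_iff_dvd _ _).mp (h _ hrel_mod i)
  rw [hgcd] at hdvd
  exact hp (Int.natCast_dvd_natCast.mp hdvd |> Nat.dvd_one.mp)

theorem linearIndependent_cast_rat {v : ι → κ → ℤ} (h : LinearIndependent ℤ v) :
    LinearIndependent ℚ fun i j => (v i j : ℚ) :=
  (LinearIndependent.iff_fractionRing ℤ ℚ).mp <|
    h.map' ((Int.castAddHom ℚ).toIntLinearMap.compLeft κ) <| LinearMap.ker_eq_bot.mpr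
      fun _ _ hab => funext fun j => Int.cast_injective (congrFun hab j)

end Int

namespace Matrix

variable {m n : Type*}

theorem rank_map_zmod_le_rank_map_rat [Fintype n] (A : Matrix m n ℤ) (p : ℕ) [Fact p.Prime] :
    (A.map (Int.cast : ℤ → ZMod p)).rank ≤ (A.map (Int.cast : ℤ → ℚ)).rank := by
  obtain ⟨κ, a, ha, hspan, hli⟩ :=
    exists_linearIndependent' (ZMod p) (A.map (Int.cast : ℤ → ZMod p)).col
  have : Fintype κ := Fintype.ofInjective a ha
  have hli_rat : LinearIndependent ℚ ((A.map (Int.cast : ℤ → ℚ)).col ∘ a) :=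
    Int.linearIndependent_cast_rat (Int.linearIndependent_of_linearIndependent_cast_zmod
      (Fact.out : p.Prime).ne_one hli)
  have := Module.Finite.span_of_finite ℚ (Set.finite_range (A.map (Int.cast : ℤ → ℚ)).col)
  calc (A.map (Int.cast : ℤ → ZMod p)).rank = Fintype.card κ := by
        rw [rank_eq_finrank_span_cols, ← hspan, finrank_span_eq_card hli]
    _ = finrank ℚ (Submodule.span ℚ (Set.range ((A.map (Int.cast : ℤ → ℚ)).col ∘ a))) :=
        (finrank_span_eq_card hli_rat).symm
    _ ≤ (A.map (Int.cast : ℤ → ℚ)).rank := by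
        rw [rank_eq_finrank_span_cols]
        exact Submodule.finrank_mono (Submodule.span_mono (Set.range_comp_subset_range _ _))

theorem card_le_rank_of_det_submatrix_ne_zero {K k : Type*} [Field K] [Fintype n] [Fintype k]
    [DecidableEq k] (A : Matrix m n K) (f : k → m) (g : k → n) (h : (A.submatrix f g).det ≠ 0) :
    Fintype.card k ≤ A.rank := by
  rw [← rank_of_isUnit _ ((isUnit_iff_isUnit_det _).mpr h.isUnit)]
  exact rank_submatrix_le A f g

theorem dvd_det_of_rank_map_zmod_ne {r : ℕ} [Fintype n] (A : Matrix m n ℤ)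
    (hr : (A.map (Int.cast : ℤ → ℚ)).rank = r) (ρ : Fin r → m) (γ : Fin r → n) {p : ℕ}
    (hp : p.Prime) (hrank : (A.map (Int.cast : ℤ → ZMod p)).rank ≠ r) :
    p ∣ (A.submatrix ρ γ).det.natAbs := by
  have : Fact p.Prime := ⟨hp⟩
  rw [← Int.natCast_dvd, ← ZMod.intCast_zmod_eq_zero_iff_dvd]
  by_contra hdet
  have hdet' : ((A.map (Int.cast : ℤ → ZMod p)).submatrix ρ γ).det ≠ 0 := by
    change ((Int.castRingHom (ZMod p)).mapMatrix (A.submatrix ρ γ)).det ≠ 0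
    rwa [← RingHom.map_det]
  have hlow := (A.map (Int.cast : ℤ → ZMod p)).card_le_rank_of_det_submatrix_ne_zero ρ γ hdet'
  have hup := hr ▸ A.rank_map_zmod_le_rank_map_rat p
  rw [Fintype.card_fin] at hlow
  exact hrank (le_antisymm hup hlow)

end Matrix

theorem Nat.card_primeFactors_le_log {n : ℕ} (hn : n ≠ 0) : n.primeFactors.card ≤ Nat.log 2 n :=
  (Nat.le_log_iff_pow_le one_lt_two hn).mpr <|
    (Finset.pow_card_le_prod _ _ _ fun _ hp => (Nat.prime_of_mem_primeFactors hp).two_le).trans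
      (Nat.le_of_dvd (Nat.pos_of_ne_zero hn) (Nat.prod_primeFactors_dvd n))

theorem rank_dropping_primes_finite_and_few_general
    (m n r : ℕ) (A : Matrix (Fin m) (Fin n) ℤ)
    (hr : (A.map (Int.cast : ℤ → ℚ)).rank = r)
    (ρ : Fin r → Fin m) (γ : Fin r → Fin n)
    (d : ℤ) (hd : d = (A.submatrix ρ γ).det) (hd0 : d ≠ 0) :
    {p : ℕ | p.Prime ∧ (A.map (Int.cast : ℤ → ZMod p)).rank ≠ r}.Finite ∧
    {p : ℕ | p.Prime ∧ (A.map (Int.cast : ℤ → ZMod p)).rank ≠ r}.ncard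
      ≤ Nat.log 2 d.natAbs := by
  have hsub : {p : ℕ | p.Prime ∧ (A.map (Int.cast : ℤ → ZMod p)).rank ≠ r}
      ⊆ d.natAbs.primeFactors := fun p ⟨hp, hrank⟩ =>
    Nat.mem_primeFactors.mpr
      ⟨hp, hd ▸ A.dvd_det_of_rank_map_zmod_ne hr ρ γ hp hrank, Int.natAbs_ne_zero.mpr hd0⟩
  refine ⟨d.natAbs.primeFactors.finite_toSet.subset hsub, ?_⟩
  calc _ ≤ d.natAbs.primeFactors.card := by
        simpa using Set.ncard_le_ncard hsub d.natAbs.primeFactors.finite_toSet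
    _ ≤ Nat.log 2 d.natAbs := Nat.card_primeFactors_le_log (Int.natAbs_ne_zero.mpr hd0)

theorem rank_dropping_primes_finite_and_few
    (m n r : ℕ) (hr1 : 1 ≤ r) (A : Matrix (Fin m) (Fin n) ℤ)
    (hr : (A.map (Int.cast : ℤ → ℚ)).rank = r)
    (ρ : Fin r → Fin m) (γ : Fin r → Fin n)
    (hρ : Function.Injective ρ) (hγ : Function.Injective γ)
    (d : ℤ) (hd : d = (A.submatrix ρ γ).det) (hd0 : d ≠ 0) :
    {p : ℕ | p.Prime ∧ (A.map (Int.cast : ℤ → ZMod p)).rank ≠ r}.Finite ∧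
    {p : ℕ | p.Prime ∧ (A.map (Int.cast : ℤ → ZMod p)).rank ≠ r}.ncard
      ≤ Nat.log 2 d.natAbs :=
  rank_dropping_primes_finite_and_few_general m n r A hr ρ γ d hd hd0
end

section
/- Let F be a field, n ≥ 1, let A be a singular n×n matrix over F, let S ⊆ F be a finite subset, and let k ≥ 1. Then the number of k-tuples (b_1, …, b_k) of vectors in S^n (each b_j having all its n coordinates in S) such that for every j ∈ {1, …, k} the system A·w = b_j has a solution w ∈ F^n is at most |S|^(k·(n−1)). In particular, k independent repetitions of the consistency test accept a singular matrix with probability at most 1/|S|^k. -/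
/-!
A singular matrix `A` has a nonzero left null vector `v`, so every consistent right-hand side `b`
lies in the hyperplane `v ⬝ᵥ b = 0`. On that hyperplane the coordinate at an index where `v` does
not vanish is determined by the others, so at most `|S| ^ (n - 1)` vectors of `S ^ n` are
consistent; the `k` rounds are independent, so these counts multiply.
-/

open Finset

theorem Fintype.card_filter_piFinset_forall {ι α : Type*} [Fintype ι] [DecidableEq ι]
    (s : Finset α) (p : α → Prop) [DecidablePred p]
    [DecidablePred fun b : ι → α => ∀ j, p (b j)] :
    #((piFinset fun _ : ι => s).filter fun b => ∀ j, p (b j)) = #(s.filter p) ^ card ι := by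
  have hfilter : ((piFinset fun _ : ι => s).filter fun b => ∀ j, p (b j)) =
      piFinset fun _ => s.filter p := by
    ext b
    simp [forall_and]
  rw [hfilter, card_piFinset, prod_const, card_univ]

namespace Matrix

section DotProduct

variable {ι R : Type*} [Fintype ι] [Ring R] [NoZeroDivisors R]

theorem eq_of_dotProduct_eq_zero_of_forall_ne {v b c : ι → R} {i₀ : ι} (hv : v i₀ ≠ 0)
    (hb : v ⬝ᵥ b = 0) (hc : v ⬝ᵥ c = 0) (hbc : ∀ i ≠ i₀, b i = c i) : b = c := by
  have hoff : ∀ i ≠ i₀, v i * (b - c) i = 0 := fun i hi => by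
    rw [Pi.sub_apply, hbc i hi, sub_self, mul_zero]
  have hvi₀ : v i₀ * (b - c) i₀ = 0 := by
    rw [← Fintype.sum_eq_single i₀ hoff, ← dotProduct, dotProduct_sub, hb, hc, sub_zero]
  have hi₀ : b i₀ = c i₀ := sub_eq_zero.1 ((mul_eq_zero.1 hvi₀).resolve_left hv)
  funext i
  by_cases hi : i = i₀
  · exact hi ▸ hi₀
  · exact hbc i hi

theorem card_filter_dotProduct_eq_zero_le [DecidableEq ι] [DecidableEq R] {v : ι → R}
    (hv : v ≠ 0) (S : Finset R) :
    #((Fintype.piFinset fun _ : ι => S).filter fun b => v ⬝ᵥ b = 0)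
      ≤ #S ^ (Fintype.card ι - 1) := by
  obtain ⟨i₀, hi₀⟩ := Function.ne_iff.1 hv
  calc _ ≤ #(Fintype.piFinset fun _ : {i // i ≠ i₀} => S) := by
        refine card_le_card_of_injOn (fun b i => b i) (fun b hb => ?_) fun b hb c hc hbc => ?_
        · simp only [coe_filter, Fintype.mem_piFinset] at hb
          simp [hb.1]
        · simp only [coe_filter, Fintype.mem_piFinset] at hb hc
          exact eq_of_dotProduct_eq_zero_of_forall_ne hi₀ hb.2 hc.2 fun i hi =>
            congrFun hbc ⟨i, hi⟩
    _ = #S ^ (Fintype.card ι - 1) := by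
        simp [Fintype.card_subtype_compl]

end DotProduct

variable {ι K : Type*} [Fintype ι] [DecidableEq ι] [Field K]

theorem exists_ne_zero_dotProduct_mulVec_eq_zero {A : Matrix ι ι K} (hA : ¬IsUnit A) :
    ∃ v ≠ 0, ∀ w, v ⬝ᵥ A *ᵥ w = 0 := by
  have hdet : A.det = 0 := by
    rwa [isUnit_iff_isUnit_det, isUnit_iff_ne_zero, not_not] at hA
  obtain ⟨v, hv, hvA⟩ := exists_vecMul_eq_zero_iff.2 hdet
  exact ⟨v, hv, fun w => by rw [dotProduct_mulVec, hvA, zero_dotProduct]⟩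

open Classical in
theorem card_filter_exists_mulVec_eq_le {A : Matrix ι ι K} (hA : ¬IsUnit A) (S : Finset K) :
    #((Fintype.piFinset fun _ : ι => S).filter fun b => ∃ w, A *ᵥ w = b)
      ≤ #S ^ (Fintype.card ι - 1) := by
  obtain ⟨v, hv, hvA⟩ := exists_ne_zero_dotProduct_mulVec_eq_zero hA
  refine (card_le_card (monotone_filter_right _ ?_)).trans (card_filter_dotProduct_eq_zero_le hv S)
  rintro b - ⟨w, rfl⟩
  exact hvA w

end Matrix

open Classical in
theorem nonsingularity_certificate_repeated_soundness_general
    (F : Type*) [Field F] (n : ℕ)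
    (A : Matrix (Fin n) (Fin n) F) (hA : ¬ IsUnit A)
    (S : Finset F) (k : ℕ) :
    ((Fintype.piFinset (fun _ : Fin k => Fintype.piFinset (fun _ : Fin n => S))).filter
        (fun b => ∀ j : Fin k, ∃ w : Fin n → F, A.mulVec w = b j)).card
      ≤ S.card ^ (k * (n - 1)) := by
  rw [Fintype.card_filter_piFinset_forall _ fun b => ∃ w, A.mulVec w = b, Fintype.card_fin,
    mul_comm, pow_mul]
  gcongr
  simpa using Matrix.card_filter_exists_mulVec_eq_le hA S

open Classical in
theorem nonsingularity_certificate_repeated_soundness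
    (F : Type*) [Field F] (n : ℕ) (hn : 1 ≤ n)
    (A : Matrix (Fin n) (Fin n) F) (hA : ¬ IsUnit A)
    (S : Finset F) (k : ℕ) (hk : 1 ≤ k) :
    ((Fintype.piFinset (fun _ : Fin k => Fintype.piFinset (fun _ : Fin n => S))).filter
        (fun b => ∀ j : Fin k, ∃ w : Fin n → F, A.mulVec w = b j)).card
      ≤ S.card ^ (k * (n - 1)) :=
  nonsingularity_certificate_repeated_soundness_general F n A hA S k
end
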